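/- Extension of a setfunction from clopen to compact sets preserves monotonicity and submodularity: let C be a compact totally disconnected metrizable space, H its algebra of clopen sets, and ψ_H an increasing submodular setfunction on H. Define ψ_K(K) = inf{ψ_H(H) : K ⊆ H, H ∈ H} for compact K ⊆ C. Then ψ_K extends ψ_H, is increasing, and is submodular on the compact sets (ψ_K(K₁)+ψ_K(K₂) ≥ ψ_K(K₁∩K₂)+ψ_K(K₁∪K₂)). -/
import Mathlib


theorem clopen_to_compact_extension {C : Type*} [TopologicalSpace C]
    [CompactSpace C] [TotallyDisconnectedSpace C]
    [TopologicalSpace.MetrizableSpace C]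
    (ψH : Set C → ℝ)
    (hmono : ∀ H₁ H₂ : Set C, IsClopen H₁ → IsClopen H₂ → H₁ ⊆ H₂ → ψH H₁ ≤ ψH H₂)
    (hsub : ∀ H₁ H₂ : Set C, IsClopen H₁ → IsClopen H₂ →
      ψH (H₁ ∩ H₂) + ψH (H₁ ∪ H₂) ≤ ψH H₁ + ψH H₂)
    (ψK : Set C → ℝ)
    (hψK : ∀ K : Set C, IsCompact K →
      ψK K = sInf {t : ℝ | ∃ H : Set C, IsClopen H ∧ K ⊆ H ∧ t = ψH H}) :
    (∀ H : Set C, IsClopen H → ψK H = ψH H) ∧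
    (∀ K₁ K₂ : Set C, IsCompact K₁ → IsCompact K₂ → K₁ ⊆ K₂ → ψK K₁ ≤ ψK K₂) ∧
    (∀ K₁ K₂ : Set C, IsCompact K₁ → IsCompact K₂ →
      ψK (K₁ ∩ K₂) + ψK (K₁ ∪ K₂) ≤ ψK K₁ + ψK K₂) := by
  haveI : T2Space C := TopologicalSpace.t2Space_of_metrizableSpace
  set S : Set C → Set ℝ := fun K => {t : ℝ | ∃ H : Set C, IsClopen H ∧ K ⊆ H ∧ t = ψH H}
    with hS
  have hne : ∀ K : Set C, (S K).Nonempty := fun K =>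
    ⟨ψH Set.univ, Set.univ, isClopen_univ, Set.subset_univ K, rfl⟩
  have hbdd : ∀ K : Set C, BddBelow (S K) := by
    intro K
    refine ⟨ψH ∅, ?_⟩
    rintro t ⟨H, hH, -, rfl⟩
    exact hmono ∅ H isClopen_empty hH (Set.empty_subset H)
  have hle : ∀ K : Set C, IsCompact K → ∀ H : Set C, IsClopen H → K ⊆ H → ψK K ≤ ψH H := by
    intro K hK H hH hKH
    rw [hψK K hK]
    exact csInf_le (hbdd K) ⟨H, hH, hKH, rfl⟩
  refine ⟨?_, ?_, ?_⟩
  · intro H hH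
    refine le_antisymm (hle H hH.isClosed.isCompact H hH subset_rfl) ?_
    rw [hψK H hH.isClosed.isCompact]
    refine le_csInf (hne H) ?_
    rintro t ⟨H', hH', hsub', rfl⟩
    exact hmono H H' hH hH' hsub'
  · intro K₁ K₂ hK₁ hK₂ h12
    rw [hψK K₂ hK₂]
    refine le_csInf (hne K₂) ?_
    rintro t ⟨H, hH, hsub', rfl⟩
    exact hle K₁ hK₁ H hH (h12.trans hsub')
  · intro K₁ K₂ hK₁ hK₂
    refine le_of_forall_pos_le_add ?_
    intro ε hε
    obtain ⟨t₁, ⟨H₁, hH₁, hs₁, rfl⟩, ht₁⟩ :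
        ∃ t ∈ S K₁, t < ψK K₁ + ε / 2 := by
      apply exists_lt_of_csInf_lt (hne K₁)
      rw [← hψK K₁ hK₁]
      linarith
    obtain ⟨t₂, ⟨H₂, hH₂, hs₂, rfl⟩, ht₂⟩ :
        ∃ t ∈ S K₂, t < ψK K₂ + ε / 2 := by
      apply exists_lt_of_csInf_lt (hne K₂)
      rw [← hψK K₂ hK₂]
      linarith
    have hi : ψK (K₁ ∩ K₂) ≤ ψH (H₁ ∩ H₂) :=
      hle _ (hK₁.inter_right hK₂.isClosed) _ (hH₁.inter hH₂)
        (Set.inter_subset_inter hs₁ hs₂)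
    have hu : ψK (K₁ ∪ K₂) ≤ ψH (H₁ ∪ H₂) :=
      hle _ (hK₁.union hK₂) _ (hH₁.union hH₂) (Set.union_subset_union hs₁ hs₂)
    have := hsub H₁ H₂ hH₁ hH₂
    linarith
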